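/- Let G ⊆ {1,…,n} and write Q(G) = {x ∈ G : u_x > 2}. Then the set {B_{G,a,G} : a ⊆ Q(G)} is an F-basis of the subalgebra E*_G T E*_G of the Terwilliger F-algebra T, and for all H, I ⊆ Q(G): B_{G,H,G} · B_{G,I,G} = (k_{H∩I} mod char F) · B_{G,H∪I,G}, where k_S = ∏_{x∈S}(u_x − 1). -/

import Mathlib

open Finset

variable {n : ℕ} {U : Fin n → Type*} [∀ i, Fintype (U i)] [∀ i, DecidableEq (U i)]
variable (F : Type*) [Field F]

/-- `D(y,z) = {i : y i ≠ z i}`. -/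
def Dst (y z : ∀ i, U i) : Finset (Fin n) := univ.filter (fun i => y i ≠ z i)

/-- Adjacency matrix of the relation indexed by `S`. -/
def adjMat (S : Finset (Fin n)) : Matrix (∀ i, U i) (∀ i, U i) F :=
  fun y z => if Dst y z = S then 1 else 0

/-- Dual idempotent with respect to the base point `x`. -/
def dualIdem (x : ∀ i, U i) (S : Finset (Fin n)) : Matrix (∀ i, U i) (∀ i, U i) F :=
  Matrix.diagonal (fun y => if Dst x y = S then 1 else 0)

/-- The Terwilliger `F`-algebra of the factorial scheme with base point `x`. -/
def TerwAlg (x : ∀ i, U i) : Subalgebra F (Matrix (∀ i, U i) (∀ i, U i) F) :=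
  Algebra.adjoin F (Set.range (adjMat F) ∪ Set.range (dualIdem F x))

/-- `B_{A,B,C} = ∑_{AΔC ⊆ b ⊆ B} E*_A A_b E*_C`. -/
def Bmat (x : ∀ i, U i) (A B C : Finset (Fin n)) : Matrix (∀ i, U i) (∀ i, U i) F :=
  ∑ b ∈ B.powerset.filter (fun b => symmDiff A C ⊆ b),
    dualIdem F x A * adjMat F b * dualIdem F x C

/-- `k_S = ∏_{x ∈ S} (u_x - 1)`. -/
def kval (u : Fin n → ℕ) (S : Finset (Fin n)) : ℕ := ∏ i ∈ S, (u i - 1)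


set_option linter.unusedSectionVars false

/-!
Entrywise, `B_{G,b,G}` is the indicator of the pairs `(y, z)` with `D(x,y) = D(x,z) = G` and
`D(y,z) ⊆ b`. The product `B_{G,H,G} B_{G,I,G}` therefore counts middle points `w`, and the count
factors over the coordinates: a coordinate in `H ∩ I` leaves `u_i - 1` choices for `w_i`, any
other coordinate at most one, and exactly one iff `y_i = z_i` or `i ∈ H ∪ I`.

Every matrix in `T` is invariant under the coordinatewise permutations fixing `x`, and these act
transitively on the pairs with prescribed `(D(x,y), D(x,z), D(y,z))`. So `E*_G t E*_G` is a
combination of the `E*_G A_a E*_G`, where `a ⊆ Q(G)` because a coordinate of `D(y,z)` carries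
three distinct symbols `x_i, y_i, z_i`; and `B_{G,a,G} = ∑_{b ⊆ a} E*_G A_b E*_G` is unitriangular
in these. Evaluating at one pair with `D(y,z) = a` for each `a ⊆ Q(G)` reduces linear
independence to that of the zeta function of the subset order.
-/

lemma mem_Dst {y z : ∀ i, U i} {i : Fin n} : i ∈ Dst y z ↔ y i ≠ z i := by
  simp [Dst]

lemma Dst_eq_iff {y z : ∀ i, U i} {S : Finset (Fin n)} :
    Dst y z = S ↔ ∀ i, (y i ≠ z i ↔ i ∈ S) := by
  simp only [Finset.ext_iff, mem_Dst]

lemma Dst_subset_iff {y z : ∀ i, U i} {S : Finset (Fin n)} :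
    Dst y z ⊆ S ↔ ∀ i, y i ≠ z i → i ∈ S := by
  simp only [subset_iff, mem_Dst]

lemma Dst_eq_Dst_iff {y z y' z' : ∀ i, U i} :
    Dst y z = Dst y' z' ↔ ∀ i, (y i = z i ↔ y' i = z' i) := by
  simp only [Finset.ext_iff, mem_Dst, not_iff_not]

lemma dualIdem_mul_mul_dualIdem_apply (x : ∀ i, U i) (S T : Finset (Fin n))
    (M : Matrix (∀ i, U i) (∀ i, U i) F) (y z : ∀ i, U i) :
    (dualIdem F x S * M * dualIdem F x T) y z
      = if Dst x y = S ∧ Dst x z = T then M y z else 0 := by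
  simp only [dualIdem, Matrix.mul_diagonal, Matrix.diagonal_mul]
  split_ifs <;> simp_all

lemma Bmat_eq_sum (x : ∀ i, U i) (G B : Finset (Fin n)) :
    Bmat F x G B G = ∑ b ∈ B.powerset, dualIdem F x G * adjMat F b * dualIdem F x G := by
  simp [Bmat, symmDiff_self]

lemma Bmat_apply (x : ∀ i, U i) (G B : Finset (Fin n)) (y z : ∀ i, U i) :
    Bmat F x G B G y z = if Dst x y = G ∧ Dst x z = G ∧ Dst y z ⊆ B then 1 else 0 := by
  simp only [Bmat_eq_sum, Matrix.sum_apply, dualIdem_mul_mul_dualIdem_apply, adjMat]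
  split_ifs <;> simp_all

lemma dualIdem_mul_Bmat_mul_dualIdem (x : ∀ i, U i) (G B : Finset (Fin n)) :
    dualIdem F x G * Bmat F x G B G * dualIdem F x G = Bmat F x G B G := by
  ext y z
  rw [dualIdem_mul_mul_dualIdem_apply, Bmat_apply]
  split_ifs <;> simp_all

lemma Bmat_mem_TerwAlg (x : ∀ i, U i) (G B : Finset (Fin n)) : Bmat F x G B G ∈ TerwAlg F x := by
  have hE : dualIdem F x G ∈ TerwAlg F x := Algebra.subset_adjoin (Or.inr ⟨G, rfl⟩)
  rw [Bmat_eq_sum]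
  exact Subalgebra.sum_mem _ fun b _ =>
    mul_mem (mul_mem hE (Algebra.subset_adjoin (Or.inl ⟨b, rfl⟩))) hE

lemma card_filter_eq_one_of_iff {α : Type*} [Fintype α] {p : α → Prop} [DecidablePred p] {c : α}
    (hp : ∀ a, p a ↔ a = c) : #{a | p a} = 1 :=
  card_eq_one.2 ⟨c, by ext a; simp [hp]⟩

lemma card_filter_coord_middle {α : Type*} [Fintype α] [DecidableEq α] {x y z : α} {g h k : Prop}
    [Decidable g] [Decidable h] [Decidable k] (hy : x ≠ y ↔ g) (hz : x ≠ z ↔ g)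
    (hg : h ∧ k → g) :
    #{a | (x ≠ a ↔ g) ∧ (y ≠ a → h) ∧ (a ≠ z → k)}
      = (if h ∧ k then Fintype.card α - 1 else 1) * (if y ≠ z → h ∨ k then 1 else 0) := by
  by_cases hh : h <;> by_cases hk : k
  · simp [hh, hk, hg ⟨hh, hk⟩, filter_ne, card_univ]
  · rw [card_filter_eq_one_of_iff (c := z) fun a => ?_]
    · simp [hh, hk]
    · constructor
      · rintro ⟨-, -, haz⟩; by_contra hne; exact hk (haz hne)
      · rintro rfl; exact ⟨hz, fun _ => hh, fun hne => absurd rfl hne⟩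
  · rw [card_filter_eq_one_of_iff (c := y) fun a => ?_]
    · simp [hh, hk]
    · constructor
      · rintro ⟨-, hya, -⟩; by_contra hne; exact hh (hya (Ne.symm hne))
      · rintro rfl; exact ⟨hy, fun hne => absurd rfl hne, fun _ => hk⟩
  · by_cases hyz : y = z
    · subst hyz
      rw [card_filter_eq_one_of_iff (c := y) fun a => ?_]
      · simp [hh, hk]
      · constructor
        · rintro ⟨-, hya, -⟩; by_contra hne; exact hh (hya (Ne.symm hne))
        · rintro rfl; exact ⟨hy, fun hne => absurd rfl hne, fun hne => absurd rfl hne⟩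
    · have hempty : #{a | (x ≠ a ↔ g) ∧ (y ≠ a → h) ∧ (a ≠ z → k)} = 0 :=
        card_eq_zero.2 <| filter_eq_empty_iff.2 fun a _ ⟨_, hya, haz⟩ =>
          hyz ((not_not.1 (mt hya hh)).trans (not_not.1 (mt haz hk)))
      rw [hempty]
      simp [hh, hk, hyz]

lemma Bmat_mul_Bmat (u : Fin n → ℕ) (hu : ∀ i, Fintype.card (U i) = u i) (x : ∀ i, U i)
    {G H I : Finset (Fin n)} (hHI : H ∩ I ⊆ G) :
    Bmat F x G H G * Bmat F x G I G = (kval u (H ∩ I) : F) • Bmat F x G (H ∪ I) G := by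
  ext y z
  rw [Matrix.mul_apply, Matrix.smul_apply, Bmat_apply, smul_eq_mul]
  by_cases hy : Dst x y = G
  swap
  · simp [Bmat_apply, hy]
  by_cases hz : Dst x z = G
  swap
  · simp [Bmat_apply, hz]
  have hcoord : ∀ w, Bmat F x G H G y w * Bmat F x G I G w z = ∏ i,
      if (x i ≠ w i ↔ i ∈ G) ∧ (y i ≠ w i → i ∈ H) ∧ (w i ≠ z i → i ∈ I) then 1 else 0 := by
    intro w
    simp only [Bmat_apply, ite_zero_mul_ite_zero, one_mul, prod_boole, mem_univ, true_implies]
    refine if_congr ?_ rfl rfl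
    simp only [hy, hz, Dst_eq_iff, Dst_subset_iff, forall_and]
    tauto
  have hfactor : ∀ i, #{a | (x i ≠ a ↔ i ∈ G) ∧ (y i ≠ a → i ∈ H) ∧ (a ≠ z i → i ∈ I)}
      = (if i ∈ H ∩ I then u i - 1 else 1) * (if y i ≠ z i → i ∈ H ∪ I then 1 else 0) := by
    intro i
    simp only [← hu i, mem_inter, mem_union]
    exact card_filter_coord_middle (Dst_eq_iff.1 hy i) (Dst_eq_iff.1 hz i)
      fun hi => hHI (mem_inter.2 hi)
  calc ∑ w, Bmat F x G H G y w * Bmat F x G I G w z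
      = ∏ i, ∑ a : U i,
          if (x i ≠ a ↔ i ∈ G) ∧ (y i ≠ a → i ∈ H) ∧ (a ≠ z i → i ∈ I) then (1 : F) else 0 := by
        simp only [hcoord, Fintype.prod_sum]
    _ = ((∏ i, (if i ∈ H ∩ I then u i - 1 else 1) * (if y i ≠ z i → i ∈ H ∪ I then 1 else 0)
          : ℕ) : F) := by
        simp only [sum_boole, ← hfactor, Nat.cast_prod]
    _ = kval u (H ∩ I) * if Dst x y = G ∧ Dst x z = G ∧ Dst y z ⊆ H ∪ I then 1 else 0 := by
        rw [prod_mul_distrib, prod_ite_mem, univ_inter, prod_boole]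
        simp [kval, hy, hz, Dst_subset_iff]

lemma Equiv.swap_apply_of_eq_iff {α : Type*} [DecidableEq α] {a b c : α} (h : a = c ↔ b = c) :
    Equiv.swap a b c = c := by
  by_cases hac : a = c
  · obtain rfl := hac
    rw [h.1 rfl, Equiv.swap_self, Equiv.refl_apply]
  · exact Equiv.swap_apply_of_ne_of_ne (Ne.symm hac) fun hbc => hac (h.2 hbc.symm)

lemma exists_perm_fixing_and_mapping_pair {α : Type*} [DecidableEq α] {x p q p' q' : α}
    (hp : p = x ↔ p' = x) (hq : q = x ↔ q' = x) (hpq : q = p ↔ q' = p') :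
    ∃ g : Equiv.Perm α, g x = x ∧ g p = p' ∧ g q = q' := by
  set σ := Equiv.swap p p'
  have hσx : σ x = x := Equiv.swap_apply_of_eq_iff hp
  have hσp : σ p = p' := Equiv.swap_apply_left p p'
  refine ⟨σ.trans (Equiv.swap (σ q) q'), ?_, ?_, Equiv.swap_apply_left _ _⟩
  · simp only [Equiv.trans_apply, hσx]
    exact Equiv.swap_apply_of_eq_iff (by rw [← hq, ← hσx, σ.apply_eq_iff_eq, hσx])
  · simp only [Equiv.trans_apply, hσp]
    exact Equiv.swap_apply_of_eq_iff (by rw [← hpq, ← hσp, σ.apply_eq_iff_eq])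

lemma TerwAlg_le_equalizer_reindex (x : ∀ i, U i) (g : ∀ i, Equiv.Perm (U i))
    (hg : ∀ i, g i (x i) = x i) :
    TerwAlg F x ≤ AlgHom.equalizer
      (Matrix.reindexAlgEquiv F F (Equiv.piCongrRight g).symm).toAlgHom (AlgHom.id F _) := by
  have hDst : ∀ y z : ∀ i, U i, Dst (Equiv.piCongrRight g y) (Equiv.piCongrRight g z) = Dst y z :=
    fun y z => Dst_eq_Dst_iff.2 fun i => (g i).apply_eq_iff_eq
  have hDst_x : ∀ y : ∀ i, U i, Dst x (Equiv.piCongrRight g y) = Dst x y := fun y => by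
    rw [← hDst x y, show Equiv.piCongrRight g x = x from funext hg]
  refine Algebra.adjoin_le ?_
  rintro _ (⟨S, rfl⟩ | ⟨S, rfl⟩) <;> ext y z
  · simp [adjMat, hDst]
  · simp [dualIdem, Matrix.diagonal_apply, hDst_x]

lemma TerwAlg_apply_eq_of_Dst_eq {x : ∀ i, U i} {t : Matrix (∀ i, U i) (∀ i, U i) F}
    (ht : t ∈ TerwAlg F x) {y z y' z' : ∀ i, U i} (hy : Dst x y = Dst x y')
    (hz : Dst x z = Dst x z') (hyz : Dst y z = Dst y' z') : t y z = t y' z' := by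
  have hperm : ∀ i, ∃ g : Equiv.Perm (U i), g (x i) = x i ∧ g (y' i) = y i ∧ g (z' i) = z i :=
    fun i => exists_perm_fixing_and_mapping_pair
      (by rw [eq_comm, ← Dst_eq_Dst_iff.1 hy i, eq_comm])
      (by rw [eq_comm, ← Dst_eq_Dst_iff.1 hz i, eq_comm])
      (by rw [eq_comm, ← Dst_eq_Dst_iff.1 hyz i, eq_comm])
  choose g hgx hgy hgz using hperm
  have hfix : Matrix.reindexAlgEquiv F F (Equiv.piCongrRight g).symm t = t :=
    TerwAlg_le_equalizer_reindex F x g hgx ht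
  have := congr_fun₂ hfix y' z'
  simp only [Matrix.coe_reindexAlgEquiv, Matrix.reindex_apply, Equiv.symm_symm,
    Matrix.submatrix_apply] at this
  rwa [show Equiv.piCongrRight g y' = y from funext hgy,
    show Equiv.piCongrRight g z' = z from funext hgz] at this

lemma exists_coord_pair {α : Type*} [Fintype α] [DecidableEq α] (x : α) {g e : Prop}
    (hg : g → 1 < Fintype.card α) (he : e → g ∧ 2 < Fintype.card α) :
    ∃ p q : α, (x ≠ p ↔ g) ∧ (x ≠ q ↔ g) ∧ (p ≠ q ↔ e) := by
  by_cases hge : e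
  · obtain ⟨hgg, h3⟩ := he hge
    obtain ⟨p, hp⟩ := Fintype.exists_ne_of_one_lt_card (hg hgg) x
    have hcard : #{x, p} < #(univ : Finset α) :=
      (card_le_two.trans_lt h3).trans_eq card_univ.symm
    obtain ⟨q, -, hq⟩ := exists_mem_notMem_of_card_lt_card hcard
    simp only [mem_insert, mem_singleton, not_or] at hq
    exact ⟨p, q, by simp [hp.symm, Ne.symm hq.1, Ne.symm hq.2, hgg, hge]⟩
  · by_cases hgg : g
    · obtain ⟨p, hp⟩ := Fintype.exists_ne_of_one_lt_card (hg hgg) x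
      exact ⟨p, p, by simp [hp.symm, hgg, hge]⟩
    · exact ⟨x, x, by simp [hgg, hge]⟩

lemma exists_Dst_eq_of_subset (u : Fin n → ℕ) (hu : ∀ i, Fintype.card (U i) = u i)
    (x : ∀ i, U i) {G a : Finset (Fin n)} (h2 : ∀ i ∈ G, 2 ≤ u i)
    (ha : a ⊆ G.filter (fun i => 2 < u i)) :
    ∃ y z : ∀ i, U i, Dst x y = G ∧ Dst x z = G ∧ Dst y z = a := by
  have hcoord : ∀ i, ∃ p q : U i, (x i ≠ p ↔ i ∈ G) ∧ (x i ≠ q ↔ i ∈ G) ∧ (p ≠ q ↔ i ∈ a) :=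
    fun i => exists_coord_pair (x i) (fun hi => hu i ▸ h2 i hi)
      fun hi => by simpa [hu i] using ha hi
  choose y z hy hz hyz using hcoord
  exact ⟨y, z, Dst_eq_iff.2 hy, Dst_eq_iff.2 hz, Dst_eq_iff.2 hyz⟩

lemma Dst_subset_of_Dst_eq (u : Fin n → ℕ) (hu : ∀ i, Fintype.card (U i) = u i)
    {x y z : ∀ i, U i} {G : Finset (Fin n)} (hy : Dst x y = G) (hz : Dst x z = G) :
    Dst y z ⊆ G.filter (fun i => 2 < u i) := by
  intro i hi
  have hxy : x i ≠ y i ↔ i ∈ G := Dst_eq_iff.1 hy i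
  have hxz : x i ≠ z i ↔ i ∈ G := Dst_eq_iff.1 hz i
  have hyz : y i ≠ z i := mem_Dst.1 hi
  have hiG : i ∈ G := by
    by_contra hiG
    exact hyz ((not_not.1 (mt hxy.1 hiG)).symm.trans (not_not.1 (mt hxz.1 hiG)))
  exact mem_filter.2 ⟨hiG, hu i ▸ Fintype.two_lt_card_iff.2
    ⟨x i, y i, z i, hxy.2 hiG, hxz.2 hiG, hyz⟩⟩

lemma linearIndependent_ite_le {ι R : Type*} [Fintype ι] [PartialOrder ι]
    [DecidableRel (α := ι) (· ≤ ·)] [Ring R] :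
    LinearIndependent R (fun b : ι => fun a : ι => if a ≤ b then (1 : R) else 0) := by
  classical
  rw [Fintype.linearIndependent_iff]
  intro c hc
  by_contra! hne
  obtain ⟨b, hb⟩ := (univ.filter fun b => c b ≠ 0).exists_maximal
    (by simpa [Finset.Nonempty] using hne)
  have hcb : c b ≠ 0 := (mem_filter.1 hb.1).2
  have heval := congrFun hc b
  simp only [Finset.sum_apply, Pi.smul_apply, smul_eq_mul, mul_ite, mul_one, mul_zero,
    Pi.zero_apply] at heval
  rw [sum_eq_single b (fun b' _ hb' => ?_) (by simp), if_pos le_rfl] at heval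
  · exact hcb heval
  · split_ifs with hle
    · by_contra hc'
      exact hb' (le_antisymm (hb.2 (mem_filter.2 ⟨mem_univ _, hc'⟩) hle) hle)
    · rfl

lemma linearIndependent_Bmat (u : Fin n → ℕ) (hu : ∀ i, Fintype.card (U i) = u i)
    (x : ∀ i, U i) {G : Finset (Fin n)} (h2 : ∀ i ∈ G, 2 ≤ u i) :
    LinearIndependent F
      (fun a : {a : Finset (Fin n) // a ⊆ G.filter (fun i => 2 < u i)} => Bmat F x G a.val G) := by
  choose Y Z hY hZ hYZ using fun a : {a : Finset (Fin n) // a ⊆ G.filter (fun i => 2 < u i)} =>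
    exists_Dst_eq_of_subset u hu x h2 a.2
  let evalPairs : Matrix (∀ i, U i) (∀ i, U i) F →ₗ[F]
      ({a : Finset (Fin n) // a ⊆ G.filter (fun i => 2 < u i)} → F) :=
    { toFun := fun M a => M (Y a) (Z a)
      map_add' := fun _ _ => rfl
      map_smul' := fun _ _ => rfl }
  have hcomp : evalPairs ∘ (fun a => Bmat F x G a.val G) =
      fun b a => if a ≤ b then (1 : F) else 0 := by
    ext b a
    change Bmat F x G b.val G (Y a) (Z a) = _
    simp [Bmat_apply, hY, hZ, hYZ, ← Subtype.coe_le_coe]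
  exact LinearIndependent.of_comp evalPairs (hcomp ▸ linearIndependent_ite_le)

lemma dualIdem_mul_adjMat_mul_dualIdem_mem_span (u : Fin n → ℕ) (x : ∀ i, U i)
    {G a : Finset (Fin n)} (ha : a ⊆ G.filter (fun i => 2 < u i)) :
    dualIdem F x G * adjMat F a * dualIdem F x G ∈ Submodule.span F (Set.range
      (fun b : {b : Finset (Fin n) // b ⊆ G.filter (fun i => 2 < u i)} => Bmat F x G b.val G)) := by
  induction a using Finset.strongInduction with
  | _ a ih =>
    have hsum := Finset.add_sum_erase _ (fun b => dualIdem F x G * adjMat F b * dualIdem F x G)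
      (mem_powerset_self a)
    rw [← Bmat_eq_sum] at hsum
    rw [eq_sub_of_add_eq hsum]
    refine Submodule.sub_mem _ (Submodule.subset_span ⟨⟨a, ha⟩, rfl⟩) (Submodule.sum_mem _ ?_)
    intro b hb
    obtain ⟨hba, hb⟩ := mem_erase.1 hb
    exact ih b (Finset.ssubset_iff_subset_ne.2 ⟨mem_powerset.1 hb, hba⟩)
      ((mem_powerset.1 hb).trans ha)

lemma dualIdem_mul_mul_dualIdem_mem_span (u : Fin n → ℕ) (hu : ∀ i, Fintype.card (U i) = u i)
    (x : ∀ i, U i) {G : Finset (Fin n)} (h2 : ∀ i ∈ G, 2 ≤ u i)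
    {t : Matrix (∀ i, U i) (∀ i, U i) F} (ht : t ∈ TerwAlg F x) :
    dualIdem F x G * t * dualIdem F x G ∈ Submodule.span F (Set.range
      (fun b : {b : Finset (Fin n) // b ⊆ G.filter (fun i => 2 < u i)} => Bmat F x G b.val G)) := by
  choose Y Z hY hZ hYZ using fun a : {a : Finset (Fin n) // a ⊆ G.filter (fun i => 2 < u i)} =>
    exists_Dst_eq_of_subset u hu x h2 a.2
  have hdecomp : dualIdem F x G * t * dualIdem F x G = ∑ a, t (Y a) (Z a) •
      (dualIdem F x G * adjMat F a.val * dualIdem F x G) := by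
    ext y z
    simp only [Matrix.sum_apply, Matrix.smul_apply, dualIdem_mul_mul_dualIdem_apply, adjMat]
    split_ifs with hyz
    · obtain ⟨hy, hz⟩ := hyz
      let d : {a : Finset (Fin n) // a ⊆ G.filter (fun i => 2 < u i)} :=
        ⟨Dst y z, Dst_subset_of_Dst_eq u hu hy hz⟩
      rw [Fintype.sum_eq_single d fun a had => by
        rw [if_neg fun h => had (Subtype.ext h).symm, smul_zero]]
      rw [if_pos rfl, smul_eq_mul, mul_one]
      exact TerwAlg_apply_eq_of_Dst_eq F ht (hy.trans (hY d).symm) (hz.trans (hZ d).symm)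
        (hYZ d).symm
    · simp
  rw [hdecomp]
  exact Submodule.sum_mem _ fun a _ => Submodule.smul_mem _ _
    (dualIdem_mul_adjMat_mul_dualIdem_mem_span F u x a.2)

lemma span_Bmat (u : Fin n → ℕ) (hu : ∀ i, Fintype.card (U i) = u i) (x : ∀ i, U i)
    {G : Finset (Fin n)} (h2 : ∀ i ∈ G, 2 ≤ u i) :
    (Submodule.span F (Set.range
        (fun a : {a : Finset (Fin n) // a ⊆ G.filter (fun i => 2 < u i)} => Bmat F x G a.val G))
      : Set (Matrix (∀ i, U i) (∀ i, U i) F))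
      = {m | ∃ t ∈ TerwAlg F x, m = dualIdem F x G * t * dualIdem F x G} := by
  ext m
  constructor
  · intro hm
    have : m ∈ TerwAlg F x ∧ dualIdem F x G * m * dualIdem F x G = m := by
      induction hm using Submodule.span_induction with
      | mem v hv =>
        obtain ⟨a, rfl⟩ := hv
        exact ⟨Bmat_mem_TerwAlg F x G a.val, dualIdem_mul_Bmat_mul_dualIdem F x G a.val⟩
      | zero => exact ⟨zero_mem _, by simp⟩
      | add v w _ _ hv hw =>
        exact ⟨add_mem hv.1 hw.1, by rw [mul_add, add_mul, hv.2, hw.2]⟩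
      | smul r v _ hv =>
        exact ⟨Subalgebra.smul_mem _ hv.1 r, by rw [Matrix.mul_smul, Matrix.smul_mul, hv.2]⟩
    exact ⟨m, this.1, this.2.symm⟩
  · rintro ⟨t, ht, rfl⟩
    exact dualIdem_mul_mul_dualIdem_mem_span F u hu x h2 ht

theorem stmt_15 (u : Fin n → ℕ) (hu : ∀ i, Fintype.card (U i) = u i)
    (h2 : ∀ i, 2 ≤ u i) (x : ∀ i, U i) (G : Finset (Fin n)) :
    LinearIndependent F
        (fun a : {a : Finset (Fin n) // a ⊆ G.filter (fun i => 2 < u i)} =>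
          Bmat F x G a.val G) ∧
      (Submodule.span F
          (Set.range (fun a : {a : Finset (Fin n) // a ⊆ G.filter (fun i => 2 < u i)} =>
            Bmat F x G a.val G)) : Set (Matrix (∀ i, U i) (∀ i, U i) F))
        = {m | ∃ t ∈ TerwAlg F x, m = dualIdem F x G * t * dualIdem F x G} ∧
      ∀ H I : Finset (Fin n), H ⊆ G.filter (fun i => 2 < u i) →
        I ⊆ G.filter (fun i => 2 < u i) →
        Bmat F x G H G * Bmat F x G I G = (kval u (H ∩ I) : F) • Bmat F x G (H ∪ I) G :=
  ⟨linearIndependent_Bmat F u hu x fun i _ => h2 i,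
    span_Bmat F u hu x fun i _ => h2 i,
    fun _ _ hH _ => Bmat_mul_Bmat F u hu x
      ((inter_subset_left.trans hH).trans (filter_subset _ G))⟩
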